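/- arXiv:2006.01663 — 2 statements merged into one kernel-verified Lean document; each statement's English description precedes it below -/
import Mathlib

section
/- Let M be a CG lattice L-module and N a proper element of M. The following are equivalent: (1) N is a pseudo-primary element of M; (2) (N:I_M) = (N:X) for every proper element X ∈ M with X ≰ rad(N); (3) (N:a) ≤ rad(N) for every proper element a ∈ L with a > (N:I_M); (4) for every compact r ∈ L and compact K ∈ M, rK ≤ N implies r ≤ (N:I_M) or K ≤ rad(N). -/
open CompleteLattice

universe u v

/-- A multiplicative lattice: a complete lattice with a commutative, associative
multiplication distributing over arbitrary joins, whose greatest element `⊤` is the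
multiplicative identity `1`.  Following the standing assumptions of the paper, we also
require that the lattice is compactly generated, that `1` is compact and that finite
products of compact elements are compact. -/
class MultiplicativeLattice (L : Type u) extends CompleteLattice L, CommMonoid L where
  mul_sSup : ∀ (a : L) (S : Set L), a * sSup S = ⨆ b ∈ S, a * b
  one_eq_top : (1 : L) = ⊤
  compactlyGenerated : ∀ a : L, a = sSup {c : L | IsCompactElement c ∧ c ≤ a}
  top_compact : IsCompactElement (⊤ : L)
  mul_compact : ∀ a b : L, IsCompactElement a → IsCompactElement b →
    IsCompactElement (a * b)

/-- A lattice module `M` over a multiplicative lattice `L`. -/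
class LatticeModule (L : Type u) [MultiplicativeLattice L] (M : Type v)
    extends CompleteLattice M, SMul L M where
  sSup_smul : ∀ (S : Set L) (A : M), (SupSet.sSup S : L) • A = ⨆ a ∈ S, a • A
  smul_sSup : ∀ (a : L) (S : Set M), a • (sSup S) = ⨆ B ∈ S, a • B
  mul_smul : ∀ (a b : L) (A : M), (a * b) • A = a • b • A
  one_smul : ∀ A : M, (1 : L) • A = A
  bot_smul : ∀ A : M, (⊥ : L) • A = (⊥ : M)

section LDefs

variable {L : Type u} [MultiplicativeLattice L]

/-- The residual `(a : b)` in `L`. -/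
def lcolon (a b : L) : L := sSup {x : L | x * b ≤ a}

/-- The radical `√a` of an element of `L`. -/
def lrad (a : L) : L :=
  sSup {x : L | IsCompactElement x ∧ ∃ n : ℕ, 0 < n ∧ x ^ n ≤ a}

/-- A prime element of `L`: proper, and `a * b ≤ p` implies `a ≤ p` or `b ≤ p`. -/
def IsPrimeL (p : L) : Prop :=
  p < 1 ∧ ∀ a b : L, a * b ≤ p → a ≤ p ∨ b ≤ p

/-- A primary element of `L`: proper, and for compact `a, b`, `a * b ≤ q` implies
`a ≤ q` or `b ^ n ≤ q` for some positive `n`. -/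
def IsPrimaryL (q : L) : Prop :=
  q < 1 ∧ ∀ a b : L, IsCompactElement a → IsCompactElement b → a * b ≤ q →
    a ≤ q ∨ ∃ n : ℕ, 0 < n ∧ b ^ n ≤ q

/-- A principal element of `L` (meet principal and join principal). -/
def IsPrincipalElemL (e : L) : Prop :=
  (∀ a b : L, a ⊓ b * e = (lcolon a e ⊓ b) * e) ∧
  (∀ a b : L, lcolon (a * e ⊔ b) e = lcolon b e ⊔ a)

end LDefs

/-- `L` is a PG-lattice: every element is a join of principal elements. -/
def IsPGLattice (L : Type u) [MultiplicativeLattice L] : Prop :=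
  ∀ a : L, a = sSup {p : L | IsPrincipalElemL p ∧ p ≤ a}

section MDefs

variable (L : Type u) {M : Type v} [MultiplicativeLattice L] [LatticeModule L M]

/-- The residual `(A : B) ∈ L` of two elements of `M`. -/
def colon (A B : M) : L := sSup {x : L | x • B ≤ A}

/-- The residual `(N : a) ∈ M` of an element of `M` by an element of `L`. -/
def mcolon (N : M) (a : L) : M := sSup {X : M | a • X ≤ N}

/-- A prime element of `M`. -/
def IsPrimeM (N : M) : Prop :=
  N < ⊤ ∧ ∀ (a : L) (X : M), a • X ≤ N → X ≤ N ∨ a • (⊤ : M) ≤ N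

/-- A primary element of `M`. -/
def IsPrimaryM (N : M) : Prop :=
  N < ⊤ ∧ ∀ (a : L) (X : M), a • X ≤ N →
    X ≤ N ∨ ∃ n : ℕ, 0 < n ∧ (a ^ n) • (⊤ : M) ≤ N

/-- The radical `rad N` of an element of `M`: the meet of all prime elements above it. -/
def mrad (N : M) : M := sInf {P : M | IsPrimeM L P ∧ N ≤ P}

/-- A pseudo-primary element of `M`. -/
def IsPseudoPrimary (N : M) : Prop :=
  N < ⊤ ∧ ∀ (a : L) (X : M), a • X ≤ N → a ≤ colon L N ⊤ ∨ X ≤ mrad L N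

/-- A classical prime element of `M`. -/
def IsClassicalPrime (N : M) : Prop :=
  N < ⊤ ∧ ∀ (a b : L) (K : M), (a * b) • K ≤ N → a • K ≤ N ∨ b • K ≤ N

/-- A pseudo-classical primary element of `M`. -/
def IsPseudoClassicalPrimary (N : M) : Prop :=
  N < ⊤ ∧ ∀ (a b : L) (K : M), (a * b) • K ≤ N → a • K ≤ N ∨ b • K ≤ mrad L N

/-- A principal element of `M` (meet principal and join principal). -/
def IsPrincipalElem (N : M) : Prop :=
  (∀ (b : L) (B : M), (b ⊓ colon L B N) • N = b • N ⊓ B) ∧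
  (∀ (b : L) (B : M), b ⊔ colon L B N = colon L (b • N ⊔ B) N)

/-- The saturation `S_p(N)` of `N` with respect to `p`. -/
def saturation (N : M) (p : L) : M :=
  sSup {X : M | ∃ c : L, ¬ c ≤ p ∧ c • X ≤ N}

variable (M)

/-- `M` is a PG-lattice `L`-module. -/
def IsPGModule : Prop := ∀ N : M, N = sSup {P : M | IsPrincipalElem L P ∧ P ≤ N}

/-- `M` is a multiplication lattice `L`-module. -/
def IsMultiplicationModule : Prop := ∀ N : M, ∃ a : L, N = a • (⊤ : M)

/-- `M` is a faithful `L`-module. -/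
def IsFaithful : Prop := colon L (⊥ : M) (⊤ : M) = (⊥ : L)

/-- `M` is a CG (compactly generated) lattice `L`-module. -/
def IsCGModule : Prop := ∀ N : M, N = sSup {K : M | IsCompactElement K ∧ K ≤ N}

end MDefs

section Helpers

variable {L : Type u} {M : Type v} [MultiplicativeLattice L] [LatticeModule L M]

lemma my_smul_sup (a : L) (X Y : M) : a • (X ⊔ Y) = a • X ⊔ a • Y := by
  have h := LatticeModule.smul_sSup a ({X, Y} : Set M)
  rw [sSup_pair] at h
  rw [h, iSup_pair]

lemma my_sup_smul (a b : L) (X : M) : (a ⊔ b) • X = a • X ⊔ b • X := by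
  have h := LatticeModule.sSup_smul ({a, b} : Set L) X
  rw [sSup_pair] at h
  rw [h, iSup_pair]

lemma my_smul_mono_right (a : L) {X Y : M} (h : X ≤ Y) : a • X ≤ a • Y := by
  have : a • Y = a • X ⊔ a • Y := by rw [← my_smul_sup, sup_eq_right.mpr h]
  rw [this]; exact le_sup_left

lemma my_smul_mono_left {a b : L} (h : a ≤ b) (X : M) : a • X ≤ b • X := by
  have : b • X = a • X ⊔ b • X := by rw [← my_sup_smul, sup_eq_right.mpr h]
  rw [this]; exact le_sup_left

lemma my_colon_smul (N X : M) : colon L N X • X ≤ N := by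
  rw [colon, LatticeModule.sSup_smul]
  exact iSup₂_le fun x hx => hx

lemma my_le_colon {x : L} {N X : M} : x • X ≤ N ↔ x ≤ colon L N X :=
  ⟨fun h => le_sSup h, fun h => le_trans (my_smul_mono_left h X) (my_colon_smul N X)⟩

lemma my_smul_mcolon (N : M) (a : L) : a • mcolon L N a ≤ N := by
  rw [mcolon, LatticeModule.smul_sSup]
  exact iSup₂_le fun X hX => hX

lemma my_le_mcolon {X N : M} {a : L} : a • X ≤ N ↔ X ≤ mcolon L N a :=
  ⟨fun h => le_sSup h, fun h => le_trans (my_smul_mono_right a h) (my_smul_mcolon N a)⟩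

lemma my_colon_anti (N : M) {X Y : M} (h : X ≤ Y) : colon L N Y ≤ colon L N X :=
  _root_.sSup_le fun x hx => le_sSup (le_trans (my_smul_mono_right x h) hx)

lemma my_le_mrad (N : M) : N ≤ mrad L N := le_sInf fun _ hP => hP.2

end Helpers

theorem stmt4 {L : Type u} {M : Type v} [MultiplicativeLattice L] [LatticeModule L M]
    (hCG : IsCGModule L M) (N : M) (hN : N < ⊤) :
    List.TFAE [
      IsPseudoPrimary L N,
      ∀ X : M, X < ⊤ → ¬ X ≤ mrad L N → colon L N (⊤ : M) = colon L N X,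
      ∀ a : L, a < 1 → colon L N (⊤ : M) < a → mcolon L N a ≤ mrad L N,
      ∀ (r : L) (K : M), IsCompactElement r → IsCompactElement K → r • K ≤ N →
        r ≤ colon L N (⊤ : M) ∨ K ≤ mrad L N] := by
  tfae_have 1 → 2 := by
    intro h X hX hXrad
    refine le_antisymm (my_colon_anti N le_top) ?_
    rcases h.2 (colon L N X) X (my_colon_smul N X) with h1 | h2
    · exact h1
    · exact absurd h2 hXrad
  tfae_have 2 → 3 := by
    intro h a ha hNa
    rw [mcolon]
    apply _root_.sSup_le
    intro X hX
    by_cases hXr : X ≤ mrad L N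
    · exact hXr
    · by_cases hXt : X = ⊤
      · subst hXt
        exact absurd (my_le_colon.mp hX) (not_le_of_gt hNa)
      · have heq := h X (lt_of_le_of_ne le_top hXt) hXr
        have haX : a ≤ colon L N X := my_le_colon.mp hX
        rw [← heq] at haX
        exact absurd haX (not_le_of_gt hNa)
  tfae_have 3 → 4 := by
    intro h r K _ _ hrK
    by_cases hr : r ≤ colon L N (⊤ : M)
    · exact Or.inl hr
    · right
      set a := colon L N (⊤ : M) ⊔ r with ha_def
      have haK : a • K ≤ N := by
        rw [ha_def, my_sup_smul]
        exact sup_le (le_trans (my_smul_mono_right _ le_top) (my_colon_smul N ⊤)) hrK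
      by_cases hat : a = 1
      · have hK : K ≤ N := by
          have := haK
          rw [hat, LatticeModule.one_smul] at this
          exact this
        exact hK.trans (my_le_mrad N)
      · have ha1 : a < 1 := by
          rw [MultiplicativeLattice.one_eq_top]
          exact lt_of_le_of_ne le_top
            (by rw [← MultiplicativeLattice.one_eq_top]; exact hat)
        have hlt : colon L N (⊤ : M) < a :=
          lt_of_le_of_ne le_sup_left (fun he => hr (he ▸ le_sup_right))
        exact le_trans (my_le_mcolon.mp haK) (h a ha1 hlt)
  tfae_have 4 → 1 := by
    intro h
    refine ⟨hN, fun a X haX => ?_⟩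
    by_cases ha : a ≤ colon L N (⊤ : M)
    · exact Or.inl ha
    · right
      obtain ⟨r, hrc, hra, hr⟩ :
          ∃ r : L, IsCompactElement r ∧ r ≤ a ∧ ¬ r ≤ colon L N (⊤ : M) := by
        by_contra hc
        push_neg at hc
        apply ha
        calc a = sSup {c : L | IsCompactElement c ∧ c ≤ a} :=
              MultiplicativeLattice.compactlyGenerated a
          _ ≤ colon L N (⊤ : M) := _root_.sSup_le fun c hc' => hc c hc'.1 hc'.2
      conv_lhs => rw [hCG X]
      apply _root_.sSup_le
      intro K hK
      have hrK : r • K ≤ N :=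
        le_trans (le_trans (my_smul_mono_right r hK.2) (my_smul_mono_left hra X)) haX
      rcases h r K hrc hK.1 hrK with h1 | h2
      · exact absurd h1 hr
      · exact h2
  tfae_finish
end

section
/- Let L be a PG-lattice and M be a faithful multiplication PG-lattice L-module with I_M compact. If a proper element q ∈ L is primary, then qI_M is a pseudo-primary element of M. -/
open CompleteLattice

universe u v

section AuxProof

variable {L : Type u} {M : Type v} [MultiplicativeLattice L] [LatticeModule L M]

lemma aux_le_one (a : L) : a ≤ 1 := MultiplicativeLattice.one_eq_top (L := L) ▸ le_top

lemma aux_mul_sup (a b c : L) : a * (b ⊔ c) = a * b ⊔ a * c := by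
  have h := MultiplicativeLattice.mul_sSup a ({b, c} : Set L)
  rw [sSup_pair, iSup_pair] at h
  exact h

lemma aux_mul_le_mul_right {a b : L} (h : a ≤ b) (c : L) : a * c ≤ b * c := by
  have h2 : (a ⊔ b) * c = a * c ⊔ b * c := by
    rw [mul_comm, aux_mul_sup, mul_comm c a, mul_comm c b]
  rw [sup_eq_right.2 h] at h2
  rw [h2]; exact le_sup_left

lemma aux_mul_le_mul_left {a b : L} (h : a ≤ b) (c : L) : c * a ≤ c * b := by
  rw [mul_comm c a, mul_comm c b]; exact aux_mul_le_mul_right h c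

lemma aux_mul_le_left (a b : L) : a * b ≤ a := by
  have := aux_mul_le_mul_left (aux_le_one b) a
  rwa [mul_one] at this

lemma aux_mul_le_right (a b : L) : a * b ≤ b := by
  rw [mul_comm]; exact aux_mul_le_left b a

lemma aux_smul_sup (a : L) (B C : M) : a • (B ⊔ C) = a • B ⊔ a • C := by
  have h := LatticeModule.smul_sSup a ({B, C} : Set M)
  rw [sSup_pair, iSup_pair] at h
  exact h

lemma aux_sup_smul (a b : L) (C : M) : (a ⊔ b) • C = a • C ⊔ b • C := by
  have h := LatticeModule.sSup_smul ({a, b} : Set L) C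
  rw [sSup_pair, iSup_pair] at h
  exact h

lemma aux_smul_mono_right (a : L) {B C : M} (h : B ≤ C) : a • B ≤ a • C := by
  have : a • C = a • B ⊔ a • C := by rw [← aux_smul_sup, sup_eq_right.2 h]
  rw [this]; exact le_sup_left

lemma aux_smul_mono_left {a b : L} (h : a ≤ b) (C : M) : a • C ≤ b • C := by
  have : b • C = a • C ⊔ b • C := by rw [← aux_sup_smul, sup_eq_right.2 h]
  rw [this]; exact le_sup_left

lemma aux_smul_le_self (a : L) (C : M) : a • C ≤ C := by
  have := aux_smul_mono_left (aux_le_one a) C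
  rwa [LatticeModule.one_smul] at this

lemma aux_colon_smul_le (A B : M) : (colon L A B) • B ≤ A := by
  rw [colon, LatticeModule.sSup_smul]
  exact iSup₂_le fun x hx => hx

lemma aux_le_colon {x : L} {A B : M} (h : x • B ≤ A) : x ≤ colon L A B := le_sSup h

lemma aux_lcolon_mul_le (a b : L) : lcolon a b * b ≤ a := by
  rw [lcolon, mul_comm, MultiplicativeLattice.mul_sSup]
  exact iSup₂_le fun x hx => by rw [mul_comm]; exact hx

lemma aux_smul_smul (a b : L) (A : M) : a • b • A = (a * b) • A :=
  (LatticeModule.mul_smul a b A).symm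

/-- Existence of a maximal (proper) element above a proper element. -/
lemma aux_exists_maximal {J : L} (hJ : J ≠ 1) :
    ∃ m : L, J ≤ m ∧ m ≠ 1 ∧ ∀ y : L, y ≠ 1 → m ≤ y → y ≤ m := by
  have hchain : ∀ C ⊆ {x : L | x ≠ 1}, IsChain (· ≤ ·) C → ∀ y ∈ C,
      ∃ ub ∈ {x : L | x ≠ 1}, ∀ z ∈ C, z ≤ ub := by
    intro C hCs hC y hyC
    refine ⟨sSup C, ?_, fun z hz => _root_.le_sSup hz⟩
    intro hs1
    have htop : (⊤ : L) ≤ sSup C := by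
      rw [← MultiplicativeLattice.one_eq_top, ← hs1]
    obtain ⟨x, hxC, hx⟩ :=
      (CompleteLattice.isCompactElement_iff_le_of_directed_sSup_le L ⊤).1
        MultiplicativeLattice.top_compact C ⟨y, hyC⟩ hC.directedOn htop
    exact hCs hxC (by rw [MultiplicativeLattice.one_eq_top]; exact le_antisymm le_top hx)
  obtain ⟨m, hJm, hm⟩ := zorn_le_nonempty₀ {x : L | x ≠ 1} hchain J hJ
  exact ⟨m, hJm, hm.1, fun y hy hmy => hm.2 hy hmy⟩

lemma aux_max_prime {m : L} (hm1 : m ≠ 1) (hmax : ∀ y : L, y ≠ 1 → m ≤ y → y ≤ m)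
    {x y : L} (hx : ¬ x ≤ m) (hy : ¬ y ≤ m) : ¬ x * y ≤ m := by
  intro hxy
  have hmx : m ⊔ x = 1 := by
    by_contra h
    exact hx (le_trans le_sup_right (hmax _ h le_sup_left))
  have hmy : m ⊔ y = 1 := by
    by_contra h
    exact hy (le_trans le_sup_right (hmax _ h le_sup_left))
  have : (1 : L) ≤ m := by
    calc (1 : L) = (m ⊔ x) * (m ⊔ y) := by rw [hmx, hmy, one_mul]
    _ = m * (m ⊔ y) ⊔ x * (m ⊔ y) := by
        rw [mul_comm, aux_mul_sup, mul_comm (m ⊔ y) m, mul_comm (m ⊔ y) x]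
    _ = (m * m ⊔ m * y) ⊔ (x * m ⊔ x * y) := by rw [aux_mul_sup, aux_mul_sup]
    _ ≤ m := by
        refine sup_le (sup_le ?_ ?_) (sup_le ?_ ?_)
        · exact aux_mul_le_left m m
        · exact aux_mul_le_left m y
        · exact aux_mul_le_right x m
        · exact hxy
  exact hm1 (le_antisymm (aux_le_one m) this)

/-- Nakayama-style lemma. -/
lemma aux_nak (hfaith : IsFaithful L M) {m : L} (hm1 : m ≠ 1)
    (hmax : ∀ y : L, y ≠ 1 → m ≤ y → y ≤ m) (hmtop : m • (⊤ : M) = ⊤)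
    (t : Finset M) (ht : ∀ Y ∈ t, IsPrincipalElem L Y) (htop : (⊤ : M) ≤ t.sup id) :
    False := by
  classical
  have key : ∀ t : Finset M, (∀ Y ∈ t, IsPrincipalElem L Y) →
      ∀ u : L, ¬ u ≤ m → u • (⊤ : M) ≤ t.sup id → False := by
    intro t
    induction t using Finset.induction_on with
    | empty =>
      intro _ u hu hut
      rw [Finset.sup_empty] at hut
      have : u ≤ colon L (⊥ : M) (⊤ : M) := aux_le_colon (le_trans hut bot_le)
      rw [hfaith] at this
      exact hu (le_trans this bot_le)
    | insert Y t' hYt ih =>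
      intro hprin u hu hut
      rw [Finset.sup_insert, id] at hut
      set Z := t'.sup id with hZ
      have hYp : IsPrincipalElem L Y := hprin Y (Finset.mem_insert_self Y t')
      have h1 : u • Y ≤ m • Y ⊔ Z := by
        calc u • Y ≤ u • (m • (⊤ : M)) := by
              rw [hmtop]; exact aux_smul_mono_right u le_top
        _ = m • (u • (⊤ : M)) := by rw [aux_smul_smul, aux_smul_smul, mul_comm]
        _ ≤ m • (Y ⊔ Z) := aux_smul_mono_right m hut
        _ = m • Y ⊔ m • Z := aux_smul_sup m Y Z
        _ ≤ m • Y ⊔ Z := sup_le_sup_left (aux_smul_le_self m Z) _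
      have h2 : u ≤ m ⊔ colon L Z Y := by
        rw [hYp.2 m Z]
        exact aux_le_colon h1
      set v := colon L Z Y with hv
      have hvm : ¬ v ≤ m := fun h => hu (le_trans h2 (sup_le le_rfl h))
      have huv : ¬ u * v ≤ m := aux_max_prime hm1 hmax hu hvm
      refine ih (fun Y hY => hprin Y (Finset.mem_insert_of_mem hY)) (u * v) huv ?_
      calc (u * v) • (⊤ : M) = v • (u • (⊤ : M)) := by rw [aux_smul_smul, mul_comm]
      _ ≤ v • (Y ⊔ Z) := aux_smul_mono_right v hut
      _ = v • Y ⊔ v • Z := aux_smul_sup v Y Z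
      _ ≤ Z := sup_le (aux_colon_smul_le Z Y) (aux_smul_le_self v Z)
  have h1m : ¬ (1 : L) ≤ m := fun h => hm1 (le_antisymm (aux_le_one m) h)
  exact key t ht 1 h1m (by rw [LatticeModule.one_smul]; exact htop)

/-- Cancellation: in a faithful multiplication PG-module with compact top,
`c • ⊤ ≤ q • ⊤` implies `c ≤ q`. -/
lemma aux_cancel (hfaith : IsFaithful L M) (hmul : IsMultiplicationModule L M)
    (hPGM : IsPGModule L M) (hcomp : IsCompactElement (⊤ : M))
    {c q : L} (h : c • (⊤ : M) ≤ q • (⊤ : M)) : c ≤ q := by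
  by_contra hcq
  set J := lcolon q c with hJdef
  have hJc : J * c ≤ q := aux_lcolon_mul_le q c
  have hJ1 : J ≠ 1 := by
    intro h1
    exact hcq (by rw [← one_mul c, ← h1]; exact hJc)
  obtain ⟨m, hJm, hm1, hmax⟩ := aux_exists_maximal hJ1
  -- finite principal decomposition of ⊤
  have hPGtop := hPGM (⊤ : M)
  obtain ⟨t, hts, htop⟩ :=
    (CompleteLattice.isCompactElement_iff_exists_le_sSup_of_le_sSup M (⊤ : M)).1 hcomp _ (le_of_eq hPGtop)
  -- colon of each N = N for multiplication modules
  have hcolon_smul : ∀ N : M, (colon L N (⊤ : M)) • (⊤ : M) = N := by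
    intro N
    obtain ⟨b, hb⟩ := hmul N
    refine le_antisymm (aux_colon_smul_le N ⊤) ?_
    have hbN : b ≤ colon L N (⊤ : M) := aux_le_colon (le_of_eq hb.symm)
    calc N = b • (⊤ : M) := hb
    _ ≤ (colon L N (⊤ : M)) • (⊤ : M) := aux_smul_mono_left hbN ⊤
  -- there is a principal X with (X : ⊤) not below m
  have hexX : ∃ X : M, IsPrincipalElem L X ∧ ¬ colon L X (⊤ : M) ≤ m := by
    by_contra hall
    push_neg at hall
    have hmtop : m • (⊤ : M) = ⊤ := by
      refine le_antisymm le_top ?_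
      conv_lhs => rw [hPGtop]
      refine sSup_le ?_
      rintro X ⟨hXp, -⟩
      calc X = (colon L X (⊤ : M)) • (⊤ : M) := (hcolon_smul X).symm
      _ ≤ m • (⊤ : M) := aux_smul_mono_left (hall X hXp) ⊤
    exact aux_nak hfaith hm1 hmax hmtop t (fun Y hY => (hts hY).1) htop
  obtain ⟨X, hXp, hXm⟩ := hexX
  set aX := colon L X (⊤ : M) with haX
  have hXeq : aX • (⊤ : M) = X := hcolon_smul X
  have hcX : c • X ≤ q • X := by
    calc c • X = aX • (c • (⊤ : M)) := by
          rw [← hXeq, aux_smul_smul, aux_smul_smul, mul_comm]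
    _ ≤ aX • (q • (⊤ : M)) := aux_smul_mono_right aX h
    _ = q • X := by rw [aux_smul_smul, mul_comm, ← aux_smul_smul, hXeq]
  set z := colon L (⊥ : M) X with hz
  have hcqz : c ≤ q ⊔ z := by
    have hjp := hXp.2 q (⊥ : M)
    rw [sup_bot_eq] at hjp
    rw [hjp]
    exact aux_le_colon hcX
  have hzax : z * aX = ⊥ := by
    have h1 : (z * aX) • (⊤ : M) ≤ (⊥ : M) := by
      rw [LatticeModule.mul_smul, hXeq]
      exact aux_colon_smul_le ⊥ X
    have h2 : z * aX ≤ colon L (⊥ : M) (⊤ : M) := aux_le_colon h1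
    rw [hfaith] at h2
    exact le_antisymm h2 bot_le
  have hcaq : aX * c ≤ q := by
    calc aX * c = c * aX := mul_comm _ _
    _ ≤ (q ⊔ z) * aX := aux_mul_le_mul_right hcqz aX
    _ = q * aX ⊔ z * aX := by
        rw [mul_comm, aux_mul_sup, mul_comm aX q, mul_comm aX z]
    _ = q * aX := by rw [hzax, sup_bot_eq]
    _ ≤ q := aux_mul_le_left q aX
  have haXJ : aX ≤ J := _root_.le_sSup (show aX ∈ {x : L | x * c ≤ q} from hcaq)
  exact hXm (le_trans haXJ hJm)

/-- Powers and primes in `M`. -/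
lemma aux_prime_pow {P : M} (hP : IsPrimeM L P) {d : L} :
    ∀ n : ℕ, 0 < n → (d ^ n) • (⊤ : M) ≤ P → d • (⊤ : M) ≤ P := by
  intro n
  induction n with
  | zero => intro h; exact absurd h (lt_irrefl 0)
  | succ n ih =>
    intro _ hpow
    rcases Nat.eq_zero_or_pos n with hn0 | hn
    · subst hn0; rwa [pow_one] at hpow
    · have : d • ((d ^ n) • (⊤ : M)) ≤ P := by
        rw [aux_smul_smul, ← pow_succ']
        exact hpow
      rcases hP.2 d ((d ^ n) • (⊤ : M)) this with h | h
      · exact ih hn h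
      · exact h

end AuxProof

theorem stmt5 {L : Type u} {M : Type v} [MultiplicativeLattice L] [LatticeModule L M]
    (hPG : IsPGLattice L) (hfaith : IsFaithful L M)
    (hmul : IsMultiplicationModule L M) (hPGM : IsPGModule L M)
    (hcomp : IsCompactElement (⊤ : M))
    (q : L) (hq : IsPrimaryL q) :
    IsPseudoPrimary L (q • (⊤ : M)) := by
  have hq1 : q < 1 := hq.1
  constructor
  · -- q • ⊤ is proper
    refine lt_of_le_of_ne le_top ?_
    intro heq
    have h1q : (1 : L) ≤ q := by
      refine aux_cancel hfaith hmul hPGM hcomp ?_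
      rw [LatticeModule.one_smul, heq]
    exact absurd h1q hq1.not_ge
  · intro a X haX
    obtain ⟨b, rfl⟩ := hmul X
    have hab : a * b ≤ q := by
      refine aux_cancel hfaith hmul hPGM hcomp ?_
      rw [LatticeModule.mul_smul]
      exact haX
    by_cases hca : a ≤ colon L (q • (⊤ : M)) (⊤ : M)
    · exact Or.inl hca
    · right
      have haq : ¬ a ≤ q := fun h => hca (aux_le_colon (aux_smul_mono_left h ⊤))
      -- find a compact c ≤ a with c ≰ q
      have hc : ∃ c : L, IsCompactElement c ∧ c ≤ a ∧ ¬ c ≤ q := by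
        by_contra hno
        push_neg at hno
        refine haq ?_
        conv_lhs => rw [MultiplicativeLattice.compactlyGenerated a]
        exact sSup_le fun x ⟨hx1, hx2⟩ => hno x hx1 hx2
      obtain ⟨c, hcc, hca', hcq⟩ := hc
      -- show b • ⊤ ≤ mrad
      refine le_sInf ?_
      rintro P ⟨hP, hNP⟩
      conv_lhs => rw [MultiplicativeLattice.compactlyGenerated b]
      rw [LatticeModule.sSup_smul]
      refine iSup₂_le ?_
      rintro d ⟨hdc, hdb⟩
      have hcd : c * d ≤ q := by
        calc c * d ≤ a * d := aux_mul_le_mul_right hca' d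
        _ ≤ a * b := aux_mul_le_mul_left hdb a
        _ ≤ q := hab
      rcases hq.2 c d hcc hdc hcd with h | ⟨n, hn, hdn⟩
      · exact absurd h hcq
      · exact aux_prime_pow hP n hn (le_trans (aux_smul_mono_left hdn ⊤) hNP)
end
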